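/- Let W ∈ ℝ^{n×n} be doubly stochastic (entrywise nonnegative with all row and column sums equal to 1), let λ ∈ [0,1], and let J ∈ ℝ^{n×n} be the matrix with every entry equal to 1/n. Then ‖Wv‖ ≤ λ·‖v‖ holds for every v ∈ ℂ^n orthogonal to the all-ones vector if and only if W is a unit-circle λ-approximation of J. -/

import Mathlib

open Matrix

noncomputable section

/-- The sesquilinear form `x* A y`. -/
def sesq {m : Type*} [Fintype m] (A : Matrix m m ℂ) (x y : m → ℂ) : ℂ :=
  star x ⬝ᵥ (A *ᵥ y)

/-- The squared Euclidean norm of a complex vector. -/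
def vnormSq {m : Type*} [Fintype m] (x : m → ℂ) : ℝ :=
  ∑ i, Complex.normSq (x i)

/-- `W̃` is a *unit-circle ε-approximation* of `W`. -/
def UnitCircleApprox {m : Type*} [Fintype m] (ε : ℝ) (W Wt : Matrix m m ℂ) : Prop :=
  ∀ x y : m → ℂ,
    ‖sesq (W - Wt) x y‖ ≤
      ε / 2 * (vnormSq x + vnormSq y - ‖sesq W x x + sesq W y y‖)

/-!
Write `x = x⊥ + (∑ᵢ xᵢ / n) • 1` with `x⊥ ⊥ 1`. Since `W` fixes `1` from both sides,
`x*(J - W)y = -x⊥* W y⊥` and `‖x‖² - x*Jx = ‖x⊥‖²`, so the unit-circle condition becomes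
`|x⊥* W y⊥| ≤ (λ/2)(‖x⊥‖² + ‖y⊥‖²)`, which follows from `‖W y⊥‖ ≤ λ‖y⊥‖` by Cauchy–Schwarz and
AM–GM. Conversely, for `v ⊥ 1` the test vectors `x = W v`, `y = s v` are both orthogonal to `1`,
and give `s‖Wv‖² ≤ (λ/2)(‖Wv‖² + s²‖v‖²)`; take `s = λ`, or `s = 1` when `λ = 0`.
-/

section

variable {m : Type*} [Fintype m]

lemma vnormSq_nonneg (x : m → ℂ) : 0 ≤ vnormSq x :=
  Finset.sum_nonneg fun _ _ => Complex.normSq_nonneg _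

lemma star_dotProduct_self (x : m → ℂ) : star x ⬝ᵥ x = (vnormSq x : ℂ) := by
  simp [dotProduct, vnormSq, Complex.normSq_eq_conj_mul_self]

lemma star_dotProduct_one (x : m → ℂ) : star x ⬝ᵥ 1 = star (∑ i, x i) := by
  simp [dotProduct_one, star_sum]

lemma sqrt_vnormSq (x : m → ℂ) : √(vnormSq x) = ‖WithLp.toLp 2 x‖ := by
  simp [EuclideanSpace.norm_eq, vnormSq, Complex.sq_norm]

lemma norm_sesq_le (A : Matrix m m ℂ) (x y : m → ℂ) :
    ‖sesq A x y‖ ≤ √(vnormSq x) * √(vnormSq (A *ᵥ y)) := by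
  rw [sqrt_vnormSq, sqrt_vnormSq, sesq, dotProduct_comm,
    ← EuclideanSpace.inner_eq_star_dotProduct]
  exact norm_inner_le_norm _ _

lemma sesq_sub_left (A B : Matrix m m ℂ) (x y : m → ℂ) :
    sesq (A - B) x y = sesq A x y - sesq B x y := by
  simp [sesq, sub_mulVec, dotProduct_sub]

def centered (x : m → ℂ) : m → ℂ := x - ((∑ i, x i) / Fintype.card m) • 1

lemma sum_centered (x : m → ℂ) : ∑ i, centered x i = 0 := by
  rcases isEmpty_or_nonempty m with _ | _
  · simp
  · have hcard : (Fintype.card m : ℂ) ≠ 0 := by simp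
    simp [centered, Finset.sum_sub_distrib, mul_div_cancel₀ _ hcard]

lemma sesq_avg (x y : m → ℂ) :
    sesq (Matrix.of fun _ _ => 1 / (Fintype.card m : ℂ)) x y
      = star (∑ i, x i) * (∑ i, y i) / Fintype.card m := by
  simp only [sesq, dotProduct, mulVec, Matrix.of_apply, Pi.star_apply, ← Finset.sum_mul,
    ← Finset.mul_sum, star_sum]
  ring

lemma vnormSq_eq_vnormSq_centered_add (x : m → ℂ) :
    vnormSq x = vnormSq (centered x) + Complex.normSq (∑ i, x i) / Fintype.card m := by
  set a := (∑ i, x i) / Fintype.card m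
  have hpoint : ∀ i, Complex.normSq (x i) = Complex.normSq (centered x i) + Complex.normSq a
      + 2 * (centered x i * star a).re := by
    intro i
    simpa [centered, a] using Complex.normSq_add (centered x i) a
  have hcross : ∑ i, 2 * (centered x i * star a).re = 0 := by
    rw [← Finset.mul_sum, ← Complex.re_sum, ← Finset.sum_mul, sum_centered, zero_mul,
      Complex.zero_re, mul_zero]
  have hconst :
      Fintype.card m * Complex.normSq a = Complex.normSq (∑ i, x i) / Fintype.card m := by
    rw [Complex.normSq_div, Complex.normSq_natCast, mul_div_assoc', mul_comm, mul_div_assoc,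
      div_self_mul_self', div_eq_mul_inv]
  simp only [vnormSq, hpoint, Finset.sum_add_distrib, hcross, Finset.sum_const, Finset.card_univ,
    nsmul_eq_mul, hconst, add_zero]

lemma sum_mulVec_of_one_vecMul {W : Matrix m m ℂ} (hcol : 1 ᵥ* W = 1) (y : m → ℂ) :
    ∑ i, (W *ᵥ y) i = ∑ i, y i := by
  rw [← one_dotProduct, dotProduct_mulVec, hcol, one_dotProduct]

lemma sesq_centered {W : Matrix m m ℂ} (hrow : W *ᵥ 1 = 1) (hcol : 1 ᵥ* W = 1) (x y : m → ℂ) :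
    sesq W (centered x) (centered y)
      = sesq W x y - sesq (Matrix.of fun _ _ => 1 / (Fintype.card m : ℂ)) x y := by
  rcases isEmpty_or_nonempty m with _ | _
  · simp [sesq]
  have hcard : (Fintype.card m : ℂ) ≠ 0 := by simp
  rw [sesq_avg]
  simp only [sesq, centered, star_sub, star_smul, star_one, mulVec_sub, mulVec_smul, hrow,
    sub_dotProduct, dotProduct_sub, smul_dotProduct, dotProduct_smul,
    one_dotProduct, sum_mulVec_of_one_vecMul hcol, star_dotProduct_one,
    Pi.one_apply, Finset.sum_const, Finset.card_univ, nsmul_eq_mul, mul_one, star_div₀,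
    star_natCast, smul_eq_mul]
  field_simp
  ring

lemma sesq_avg_self (x : m → ℂ) :
    sesq (Matrix.of fun _ _ => 1 / (Fintype.card m : ℂ)) x x
      = ((Complex.normSq (∑ i, x i) / Fintype.card m : ℝ) : ℂ) := by
  rw [sesq_avg, Complex.ofReal_div, Complex.normSq_eq_conj_mul_self, Complex.ofReal_natCast]
  rfl

lemma vnormSq_add_vnormSq_sub_norm_sesq_avg (x y : m → ℂ) :
    vnormSq x + vnormSq y
        - ‖sesq (Matrix.of fun _ _ => 1 / (Fintype.card m : ℂ)) x x
          + sesq (Matrix.of fun _ _ => 1 / (Fintype.card m : ℂ)) y y‖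
      = vnormSq (centered x) + vnormSq (centered y) := by
  have hnonneg (z : m → ℂ) : 0 ≤ Complex.normSq (∑ i, z i) / Fintype.card m := by
    have := Complex.normSq_nonneg (∑ i, z i)
    positivity
  rw [sesq_avg_self, sesq_avg_self, ← Complex.ofReal_add, Complex.norm_real,
    Real.norm_of_nonneg (add_nonneg (hnonneg x) (hnonneg y)),
    vnormSq_eq_vnormSq_centered_add x, vnormSq_eq_vnormSq_centered_add y]
  ring

theorem unitCircleApprox_avg_of_forall_sqrt_le {W : Matrix m m ℂ} (hrow : W *ᵥ 1 = 1)
    (hcol : 1 ᵥ* W = 1) {lam : ℝ} (hlam : 0 ≤ lam)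
    (h : ∀ v : m → ℂ, ∑ i, v i = 0 → √(vnormSq (W *ᵥ v)) ≤ lam * √(vnormSq v)) :
    UnitCircleApprox lam (Matrix.of fun _ _ => 1 / (Fintype.card m : ℂ)) W := by
  intro x y
  rw [vnormSq_add_vnormSq_sub_norm_sesq_avg, sesq_sub_left, ← norm_neg, neg_sub,
    ← sesq_centered hrow hcol]
  set p := √(vnormSq (centered x))
  set q := √(vnormSq (centered y))
  have hp : p ^ 2 = vnormSq (centered x) := Real.sq_sqrt (vnormSq_nonneg _)
  have hq : q ^ 2 = vnormSq (centered y) := Real.sq_sqrt (vnormSq_nonneg _)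
  calc ‖sesq W (centered x) (centered y)‖
      ≤ p * √(vnormSq (W *ᵥ centered y)) := norm_sesq_le W _ _
    _ ≤ p * (lam * q) := by gcongr; exact h _ (sum_centered y)
    _ ≤ lam / 2 * (p ^ 2 + q ^ 2) := by nlinarith [sq_nonneg (p - q)]
    _ = _ := by rw [hp, hq]

lemma sesq_avg_eq_zero_of_sum_eq_zero {x : m → ℂ} (hx : ∑ i, x i = 0) (y : m → ℂ) :
    sesq (Matrix.of fun _ _ => 1 / (Fintype.card m : ℂ)) x y = 0 := by
  rw [sesq_avg, hx, star_zero, zero_mul, zero_div]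

lemma vnormSq_smul (c : ℂ) (x : m → ℂ) : vnormSq (c • x) = Complex.normSq c * vnormSq x := by
  simp [vnormSq, Finset.mul_sum]

lemma vnormSq_mulVec_le_of_unitCircleApprox_avg {W : Matrix m m ℂ} (hcol : 1 ᵥ* W = 1)
    {lam : ℝ} (hlam : 0 ≤ lam)
    (H : UnitCircleApprox lam (Matrix.of fun _ _ => 1 / (Fintype.card m : ℂ)) W)
    {v : m → ℂ} (hv : ∑ i, v i = 0) :
    vnormSq (W *ᵥ v) ≤ lam ^ 2 * vnormSq v := by
  have hWv : ∑ i, (W *ᵥ v) i = 0 := by rw [sum_mulVec_of_one_vecMul hcol, hv]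
  have probe (s : ℝ) (hs : 0 ≤ s) :
      s * vnormSq (W *ᵥ v) ≤ lam / 2 * (vnormSq (W *ᵥ v) + s ^ 2 * vnormSq v) := by
    have hsum : ∑ i, ((s : ℂ) • v) i = 0 := by simp [← Finset.mul_sum, hv]
    have hsesq :
        sesq ((Matrix.of fun _ _ => 1 / (Fintype.card m : ℂ)) - W) (W *ᵥ v) ((s : ℂ) • v)
          = -((s * vnormSq (W *ᵥ v) : ℝ) : ℂ) := by
      rw [sesq_sub_left, sesq_avg_eq_zero_of_sum_eq_zero hWv, zero_sub, sesq, mulVec_smul,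
        dotProduct_smul, star_dotProduct_self]
      simp
    have := H (W *ᵥ v) ((s : ℂ) • v)
    rwa [hsesq, norm_neg, sesq_avg_eq_zero_of_sum_eq_zero hWv,
      sesq_avg_eq_zero_of_sum_eq_zero hsum, add_zero, norm_zero, sub_zero, vnormSq_smul,
      Complex.normSq_ofReal, ← sq, Complex.norm_real,
      Real.norm_of_nonneg (mul_nonneg hs (vnormSq_nonneg _))] at this
  rcases hlam.eq_or_lt with rfl | hpos
  · simpa using probe 1 zero_le_one
  · nlinarith [probe lam hlam]

theorem forall_sqrt_vnormSq_mulVec_le_iff_unitCircleApprox_avg {W : Matrix m m ℂ}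
    (hrow : W *ᵥ 1 = 1) (hcol : 1 ᵥ* W = 1) {lam : ℝ} (hlam : 0 ≤ lam) :
    (∀ v : m → ℂ, ∑ i, v i = 0 → √(vnormSq (W *ᵥ v)) ≤ lam * √(vnormSq v)) ↔
      UnitCircleApprox lam (Matrix.of fun _ _ => 1 / (Fintype.card m : ℂ)) W := by
  refine ⟨unitCircleApprox_avg_of_forall_sqrt_le hrow hcol hlam, fun H v hv => ?_⟩
  calc √(vnormSq (W *ᵥ v))
      ≤ √(lam ^ 2 * vnormSq v) :=
        Real.sqrt_le_sqrt (vnormSq_mulVec_le_of_unitCircleApprox_avg hcol hlam H hv)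
    _ = lam * √(vnormSq v) := by rw [Real.sqrt_mul (sq_nonneg _), Real.sqrt_sq hlam]

lemma Matrix.map_ofReal_mulVec_one {W : Matrix m m ℝ} (hrow : ∀ i, ∑ j, W i j = 1) :
    W.map Complex.ofReal *ᵥ 1 = 1 := by
  ext i
  simp [mulVec, dotProduct, ← Complex.ofReal_sum, hrow]

lemma Matrix.one_vecMul_map_ofReal {W : Matrix m m ℝ} (hcol : ∀ j, ∑ i, W i j = 1) :
    1 ᵥ* W.map Complex.ofReal = 1 := by
  ext j
  simp [vecMul, dotProduct, ← Complex.ofReal_sum, hcol]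

end

theorem expander_iff_unitCircle_approx_complete_general {n : ℕ}
    (W : Matrix (Fin n) (Fin n) ℝ)
    (hrow : ∀ i, ∑ j, W i j = 1) (hcol : ∀ j, ∑ i, W i j = 1)
    (lam : ℝ) (hlam0 : 0 ≤ lam) :
    (∀ v : Fin n → ℂ, (∑ i, v i) = 0 →
        Real.sqrt (vnormSq ((W.map Complex.ofReal) *ᵥ v)) ≤
          lam * Real.sqrt (vnormSq v)) ↔
      UnitCircleApprox lam
        (Matrix.of fun (_ _ : Fin n) => (1 / (n : ℂ)))
        (W.map Complex.ofReal) := by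
  have h := forall_sqrt_vnormSq_mulVec_le_iff_unitCircleApprox_avg
    (Matrix.map_ofReal_mulVec_one hrow) (Matrix.one_vecMul_map_ofReal hcol) hlam0
  rwa [Fintype.card_fin] at h

/-- For a doubly stochastic `W` and `λ ∈ [0,1]`:
`‖Wv‖ ≤ λ‖v‖` for all `v ⊥ 1` iff `W` is a unit-circle λ-approximation of `J`,
the matrix with every entry `1/n`. -/
theorem expander_iff_unitCircle_approx_complete {n : ℕ}
    (W : Matrix (Fin n) (Fin n) ℝ)
    (hnn : ∀ i j, 0 ≤ W i j) (hrow : ∀ i, ∑ j, W i j = 1) (hcol : ∀ j, ∑ i, W i j = 1)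
    (lam : ℝ) (hlam0 : 0 ≤ lam) (hlam1 : lam ≤ 1) :
    (∀ v : Fin n → ℂ, (∑ i, v i) = 0 →
        Real.sqrt (vnormSq ((W.map Complex.ofReal) *ᵥ v)) ≤
          lam * Real.sqrt (vnormSq v)) ↔
      UnitCircleApprox lam
        (Matrix.of fun (_ _ : Fin n) => (1 / (n : ℂ)))
        (W.map Complex.ofReal) :=
  expander_iff_unitCircle_approx_complete_general W hrow hcol lam hlam0
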